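/- arXiv:2202.12802 — 3 statements merged into one kernel-verified Lean document; each statement's English description precedes it below -/
import Mathlib

section
/- Let 𝔸 be a finite nonempty set (the set of all possible assignments) and p : 𝔸 → ℝ a function with p(A) > 0 for all A ∈ 𝔸. Let 𝔸₍ₖⱼ₎ ⊆ 𝔸 be any subset (the assignments pairing measurement k with landmark j) and let Ā ⊆ 𝔸 be a nonempty subset (the K likeliest assignments). Define the true marginal probability w = (Σ_{A ∈ 𝔸₍ₖⱼ₎} p(A)) / (Σ_{A ∈ 𝔸} p(A)) and the approximate marginal probability w̄ = (Σ_{A ∈ Ā ∩ 𝔸₍ₖⱼ₎} p(A)) / (Σ_{A ∈ Ā} p(A)). Let β ∈ ℝ satisfy β ≥ Σ_{A ∈ 𝔸 \ Ā} p(A), and define the association error bound γ = β / (β + Σ_{A ∈ Ā} p(A)). Then w ∈ [w̄ − γ, w̄ + γ], i.e. |w − w̄| ≤ γ. -/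
/-!
Split the total mass into the enumerated part `S = ∑ Ā p` and the remainder `R = ∑ 𝔸 \ Ā p`,
and the marginal mass into `a = ∑ Ā ∩ 𝔸₍ₖⱼ₎ p ≤ S` and `b = ∑ 𝔸₍ₖⱼ₎ \ Ā p ≤ R`. Then
`a / S - (a + b) / (S + R) = (a R - b S) / (S (S + R))`, whose numerator lies in `[-R S, R S]`,
so `|w̄ - w| ≤ R / (R + S)`; and `x ↦ x / (x + S)` is monotone, so `R ≤ β` gives the bound `γ`.
-/

open Finset

section OrderedField

variable {K : Type*} [Field K] [LinearOrder K] [IsStrictOrderedRing K]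

theorem abs_div_sub_add_div_add_le {a b S R : K} (ha : 0 ≤ a) (haS : a ≤ S) (hb : 0 ≤ b)
    (hbR : b ≤ R) (hS : 0 < S) :
    |a / S - (a + b) / (S + R)| ≤ R / (S + R) := by
  have hSR : 0 < S + R := by linarith
  calc |a / S - (a + b) / (S + R)|
      = |a * R - b * S| / (S * (S + R)) := by
        rw [div_sub_div _ _ hS.ne' hSR.ne', abs_div, abs_of_pos (mul_pos hS hSR)]
        congr 2; ring
    _ ≤ R * S / (S * (S + R)) := by
        gcongr
        exact abs_le.2 ⟨by nlinarith, by nlinarith⟩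
    _ = R / (S + R) := by field_simp

theorem div_add_le_div_add {x y c : K} (hx : 0 ≤ x) (hxy : x ≤ y) (hc : 0 < c) :
    x / (x + c) ≤ y / (y + c) := by
  rw [div_le_div_iff₀ (by linarith) (by linarith)]
  nlinarith

theorem abs_sum_inter_div_sub_sum_div_le {α : Type*} [DecidableEq α] {s t u : Finset α}
    {p : α → K} (hp : ∀ x ∈ s, 0 ≤ p x) (ht : t ⊆ s) (hu : u ⊆ s) (hpos : 0 < ∑ x ∈ t, p x) :
    |(∑ x ∈ t ∩ u, p x) / (∑ x ∈ t, p x) - (∑ x ∈ u, p x) / (∑ x ∈ s, p x)|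
      ≤ (∑ x ∈ s \ t, p x) / (∑ x ∈ s, p x) := by
  rw [← sum_sdiff ht, add_comm (∑ x ∈ s \ t, p x), ← sum_inter_add_sum_sdiff u t, inter_comm u t]
  refine abs_div_sub_add_div_add_le (sum_nonneg fun x hx => hp x (ht (mem_inter.1 hx).1))
    (sum_le_sum_of_subset_of_nonneg inter_subset_left fun x hx _ => hp x (ht hx))
    (sum_nonneg fun x hx => hp x (hu (mem_sdiff.1 hx).1)) ?_ hpos
  exact sum_le_sum_of_subset_of_nonneg (sdiff_subset_sdiff hu le_rfl)
    fun x hx _ => hp x (mem_sdiff.1 hx).1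

end OrderedField

theorem marginal_assignment_probability_error_bound_general
    {α : Type*} [DecidableEq α]
    (𝔸 : Finset α)
    (p : α → ℝ) (hp : ∀ A ∈ 𝔸, 0 < p A)
    (Akj : Finset α) (hAkj : Akj ⊆ 𝔸)
    (Abar : Finset α) (hAbar : Abar ⊆ 𝔸) (hAbarNe : Abar.Nonempty)
    (β : ℝ) (hβ : β ≥ ∑ A ∈ 𝔸 \ Abar, p A)
    (w wbar γ : ℝ)
    (hw : w = (∑ A ∈ Akj, p A) / (∑ A ∈ 𝔸, p A))
    (hwbar : wbar = (∑ A ∈ Abar ∩ Akj, p A) / (∑ A ∈ Abar, p A))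
    (hγ : γ = β / (β + ∑ A ∈ Abar, p A)) :
    w ∈ Set.Icc (wbar - γ) (wbar + γ) := by
  have hp_nonneg : ∀ A ∈ 𝔸, 0 ≤ p A := fun A hA => (hp A hA).le
  have hS : 0 < ∑ A ∈ Abar, p A := sum_pos (fun A hA => hp A (hAbar hA)) hAbarNe
  rw [hw, hwbar, hγ, ← Set.mem_Icc_iff_abs_le]
  calc _ ≤ (∑ A ∈ 𝔸 \ Abar, p A) / (∑ A ∈ 𝔸, p A) :=
        abs_sum_inter_div_sub_sum_div_le hp_nonneg hAbar hAkj hS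
    _ = (∑ A ∈ 𝔸 \ Abar, p A) / (∑ A ∈ 𝔸 \ Abar, p A + ∑ A ∈ Abar, p A) := by
        rw [sum_sdiff hAbar]
    _ ≤ β / (β + ∑ A ∈ Abar, p A) :=
        div_add_le_div_add (sum_nonneg fun A hA => hp_nonneg A (mem_sdiff.1 hA).1) hβ hS

/-- Theorem 1 of the paper: the marginal assignment probability error bound.
Given a finite nonempty set of assignments `𝔸` with positive weights `p`, a subset
`Akj` (assignments pairing measurement k with landmark j), a nonempty subset `Abar`
(the K likeliest assignments), and a bound `β` on the unenumerated probability mass,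
the true marginal `w` lies within `γ = β / (β + ∑ A ∈ Abar, p A)` of the
approximate marginal `wbar`. -/
theorem marginal_assignment_probability_error_bound
    {α : Type*} [DecidableEq α]
    (𝔸 : Finset α) (h𝔸 : 𝔸.Nonempty)
    (p : α → ℝ) (hp : ∀ A ∈ 𝔸, 0 < p A)
    (Akj : Finset α) (hAkj : Akj ⊆ 𝔸)
    (Abar : Finset α) (hAbar : Abar ⊆ 𝔸) (hAbarNe : Abar.Nonempty)
    (β : ℝ) (hβ : β ≥ ∑ A ∈ 𝔸 \ Abar, p A)
    (w wbar γ : ℝ)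
    (hw : w = (∑ A ∈ Akj, p A) / (∑ A ∈ 𝔸, p A))
    (hwbar : wbar = (∑ A ∈ Abar ∩ Akj, p A) / (∑ A ∈ Abar, p A))
    (hγ : γ = β / (β + ∑ A ∈ Abar, p A)) :
    w ∈ Set.Icc (wbar - γ) (wbar + γ) :=
  marginal_assignment_probability_error_bound_general 𝔸 p hp Akj hAkj Abar hAbar hAbarNe β hβ w wbar
    γ hw hwbar hγ
end

section
/- Let 𝔸 be a finite nonempty set and p : 𝔸 → ℝ with p(A) > 0 for all A ∈ 𝔸. Let 𝔸₍ₖⱼ₎ ⊆ 𝔸 and let Ā ⊆ 𝔸 be nonempty. Define w = (Σ_{A ∈ 𝔸₍ₖⱼ₎} p(A)) / (Σ_{A ∈ 𝔸} p(A)) and w̄ = (Σ_{A ∈ Ā ∩ 𝔸₍ₖⱼ₎} p(A)) / (Σ_{A ∈ Ā} p(A)). Then the exact identity holds: w − w̄ = [ (Σ_{A ∈ 𝔸₍ₖⱼ₎ \ Ā} p(A))·(1 − w̄) − (Σ_{A ∈ (𝔸 \ Ā) \ 𝔸₍ₖⱼ₎} p(A))·w̄ ] / (Σ_{A ∈ 𝔸}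 p(A)). -/
/-! Write `S`, `B`, `K`, `I` for the masses of `𝔸`, `Ā`, `𝔸₍ₖⱼ₎` and `Ā ∩ 𝔸₍ₖⱼ₎`. The two sets
on the right-hand side have masses `K - I` and `S - B - (K - I)`, and since `B * w̄ = I` the
numerator collapses to `K - S * w̄`. -/

namespace Finset

variable {ι β : Type*} [DecidableEq ι] [AddCommGroup β]

theorem sum_sdiff_eq_sub_sum_inter (s t : Finset ι) (f : ι → β) :
    ∑ i ∈ s \ t, f i = ∑ i ∈ s, f i - ∑ i ∈ t ∩ s, f i := by
  rw [← sum_inter_add_sum_sdiff s t f, inter_comm, add_sub_cancel_left]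

theorem sum_sdiff_sdiff_eq_sub_sub {u v w : Finset ι} (hv : v ⊆ u) (hw : w ⊆ u) (f : ι → β) :
    ∑ i ∈ (u \ v) \ w, f i = ∑ i ∈ u, f i - ∑ i ∈ v, f i - ∑ i ∈ w \ v, f i := by
  have hinter : w ∩ (u \ v) = w \ v := by
    ext i
    simp only [mem_inter, mem_sdiff]
    exact ⟨fun ⟨hi, _, hiv⟩ => ⟨hi, hiv⟩, fun ⟨hi, hiv⟩ => ⟨hi, hw hi, hiv⟩⟩
  rw [sum_sdiff_eq_sub_sum_inter, hinter, sum_sdiff_eq_sub hv]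

end Finset

theorem div_sub_div_eq_partition {F : Type*} [Field F] {S B K I : F} (hS : S ≠ 0) (hB : B ≠ 0) :
    K / S - I / B = ((K - I) * (1 - I / B) - (S - B - (K - I)) * (I / B)) / S := by
  field_simp
  ring

/-- The key algebraic identity in the proof of Theorem 1 of the paper:
the difference between the true marginal assignment probability `w` and its
k-best approximation `wbar` expressed via the mass of unenumerated assignments. -/
theorem marginal_assignment_probability_difference_identity
    {α : Type*} [DecidableEq α]
    (𝔸 : Finset α) (h𝔸 : 𝔸.Nonempty)
    (p : α → ℝ) (hp : ∀ A ∈ 𝔸, 0 < p A)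
    (Akj : Finset α) (hAkj : Akj ⊆ 𝔸)
    (Abar : Finset α) (hAbar : Abar ⊆ 𝔸) (hAbarNe : Abar.Nonempty)
    (w wbar : ℝ)
    (hw : w = (∑ A ∈ Akj, p A) / (∑ A ∈ 𝔸, p A))
    (hwbar : wbar = (∑ A ∈ Abar ∩ Akj, p A) / (∑ A ∈ Abar, p A)) :
    w - wbar =
      ((∑ A ∈ Akj \ Abar, p A) * (1 - wbar)
        - (∑ A ∈ (𝔸 \ Abar) \ Akj, p A) * wbar) / (∑ A ∈ 𝔸, p A) := by
  have hS : ∑ A ∈ 𝔸, p A ≠ 0 := (Finset.sum_pos hp h𝔸).ne'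
  have hB : ∑ A ∈ Abar, p A ≠ 0 :=
    (Finset.sum_pos (fun A hA => hp A (hAbar hA)) hAbarNe).ne'
  rw [hw, hwbar, Finset.sum_sdiff_sdiff_eq_sub_sub hAbar hAkj,
    Finset.sum_sdiff_eq_sub_sum_inter]
  exact div_sub_div_eq_partition hS hB
end

section
/- Let 𝔸 be a finite nonempty set and p : 𝔸 → ℝ with p(A) > 0 for all A ∈ 𝔸. Let 𝔸₍ₖⱼ₎ ⊆ 𝔸 and let Ā ⊆ 𝔸 be nonempty. Define w = (Σ_{A ∈ 𝔸₍ₖⱼ₎} p(A)) / (Σ_{A ∈ 𝔸} p(A)) and w̄ = (Σ_{A ∈ Ā ∩ 𝔸₍ₖⱼ₎} p(A)) / (Σ_{A ∈ Ā} p(A)). Then |w − w̄| ≤ ((Σ_{A ∈ 𝔸₍ₖⱼ₎ \ Ā} p(A)) / (Σ_{A ∈ 𝔸} p(A)))·(1 − w̄) + ((Σ_{A ∈ (𝔸 \ Ā) \ 𝔸₍ₖⱼ₎} p(A)) / (Σ_{A ∈ 𝔸} p(A)))·w̄. -/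
/- Writing `S = B + x + y` for the split of the total mass into `Abar`, `Akj \ Abar` and
`(𝔸 \ Abar) \ Akj`, and `a` for the mass of `Abar ∩ Akj`, one has `w = (a + x) / S` and
`wbar = a / B`, and the exact identity `w - wbar = x / S * (1 - wbar) - y / S * wbar`.
Both terms on the right are nonnegative, so the triangle inequality gives the bound. -/

open Finset

theorem Finset.sum_eq_sum_add_sum_sdiff_add_sum_sdiff_sdiff {ι M : Type*} [DecidableEq ι]
    [AddCommMonoid M] {s t u : Finset ι} (ht : t ⊆ s) (hu : u ⊆ s) (f : ι → M) :
    ∑ i ∈ s, f i = ∑ i ∈ t, f i + ∑ i ∈ u \ t, f i + ∑ i ∈ (s \ t) \ u, f i := by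
  have hinter : (s \ t) ∩ u = u \ t := by
    rw [sdiff_inter_right_comm, inter_eq_right.mpr hu]
  rw [← sum_sdiff ht, ← sum_inter_add_sum_sdiff (s \ t) u, hinter]
  abel

theorem add_div_sub_div_eq {a B x y : ℝ} (hB : B ≠ 0) (hS : B + x + y ≠ 0) :
    (a + x) / (B + x + y) - a / B
      = x / (B + x + y) * (1 - a / B) - y / (B + x + y) * (a / B) := by
  field_simp
  ring

theorem abs_add_div_sub_div_le {a B x y : ℝ} (ha : 0 ≤ a) (haB : a ≤ B) (hB : 0 < B)
    (hx : 0 ≤ x) (hy : 0 ≤ y) :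
    |(a + x) / (B + x + y) - a / B|
      ≤ x / (B + x + y) * (1 - a / B) + y / (B + x + y) * (a / B) := by
  have hS : 0 < B + x + y := by linarith
  have hq : a / B ≤ 1 := div_le_one_of_le₀ haB hB.le
  have hxterm : 0 ≤ x / (B + x + y) * (1 - a / B) := by
    have : 0 ≤ 1 - a / B := by linarith
    positivity
  have hyterm : 0 ≤ y / (B + x + y) * (a / B) := by positivity
  rw [add_div_sub_div_eq hB.ne' hS.ne']
  exact abs_le.mpr ⟨by linarith, by linarith⟩

theorem marginal_assignment_probability_triangle_bound_general
    {α : Type*} [DecidableEq α]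
    (𝔸 : Finset α)
    (p : α → ℝ) (hp : ∀ A ∈ 𝔸, 0 < p A)
    (Akj : Finset α) (hAkj : Akj ⊆ 𝔸)
    (Abar : Finset α) (hAbar : Abar ⊆ 𝔸) (hAbarNe : Abar.Nonempty)
    (w wbar : ℝ)
    (hw : w = (∑ A ∈ Akj, p A) / (∑ A ∈ 𝔸, p A))
    (hwbar : wbar = (∑ A ∈ Abar ∩ Akj, p A) / (∑ A ∈ Abar, p A)) :
    |w - wbar| ≤
      ((∑ A ∈ Akj \ Abar, p A) / (∑ A ∈ 𝔸, p A)) * (1 - wbar)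
        + ((∑ A ∈ (𝔸 \ Abar) \ Akj, p A) / (∑ A ∈ 𝔸, p A)) * wbar := by
  have hsum_nonneg : ∀ s ⊆ 𝔸, 0 ≤ ∑ A ∈ s, p A := fun s hs =>
    sum_nonneg fun A hA => (hp A (hs hA)).le
  have hAkj_split : ∑ A ∈ Akj, p A = ∑ A ∈ Abar ∩ Akj, p A + ∑ A ∈ Akj \ Abar, p A := by
    rw [inter_comm, sum_inter_add_sum_sdiff]
  subst hw hwbar
  rw [hAkj_split, sum_eq_sum_add_sum_sdiff_add_sum_sdiff_sdiff hAbar hAkj]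
  exact abs_add_div_sub_div_le
    (hsum_nonneg _ (inter_subset_left.trans hAbar))
    (sum_le_sum_of_subset_of_nonneg inter_subset_left fun A hA _ => (hp A (hAbar hA)).le)
    (sum_pos (fun A hA => hp A (hAbar hA)) hAbarNe)
    (hsum_nonneg _ (sdiff_subset.trans hAkj))
    (hsum_nonneg _ (sdiff_subset.trans sdiff_subset))

/-- The intermediate triangle-inequality bound from the proof of Theorem 1 of the
paper: the error between the true marginal assignment probability `w` and its
k-best approximation `wbar` is bounded by a convex combination (with weights
`1 - wbar` and `wbar`) of the relative masses of two disjoint subsets of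
unenumerated assignments. -/
theorem marginal_assignment_probability_triangle_bound
    {α : Type*} [DecidableEq α]
    (𝔸 : Finset α) (h𝔸 : 𝔸.Nonempty)
    (p : α → ℝ) (hp : ∀ A ∈ 𝔸, 0 < p A)
    (Akj : Finset α) (hAkj : Akj ⊆ 𝔸)
    (Abar : Finset α) (hAbar : Abar ⊆ 𝔸) (hAbarNe : Abar.Nonempty)
    (w wbar : ℝ)
    (hw : w = (∑ A ∈ Akj, p A) / (∑ A ∈ 𝔸, p A))
    (hwbar : wbar = (∑ A ∈ Abar ∩ Akj, p A) / (∑ A ∈ Abar, p A)) :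
    |w - wbar| ≤
      ((∑ A ∈ Akj \ Abar, p A) / (∑ A ∈ 𝔸, p A)) * (1 - wbar)
        + ((∑ A ∈ (𝔸 \ Abar) \ Akj, p A) / (∑ A ∈ 𝔸, p A)) * wbar :=
  marginal_assignment_probability_triangle_bound_general 𝔸 p hp Akj hAkj Abar hAbar hAbarNe w wbar
    hw hwbar
end
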